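/- Assume the odd case and d ≤ m+n. Let f ∈ End_{Mat(OB_d(m−n))}(⊕_{s∈ÔSeq[d]} s), written f = Σ γ_{s,b,t} 1_s b 1_t, and assume Θ(f) commutes with the action of osp(V). If γ_{s_r,b_r,t_r} ≠ 0 for some b_r ∈ B̂[d]_{(k,r)} with r > 0, then there exists a sequence ((s_i,b_i,t_i))_{0 ≤ i ≤ r} of oriented generalized Brauer diagrams with b_i ∈ B̂[d]_{(k_i,i)} for some k_i ≥ k, γ_{s_i,b_i,t_i} ≠ 0 for all i, and b_r ◁ b_{r−1} ◁ … ◁ b_1 ◁ b_0; in particular b_0 ∈ B̂[d]_{(k_0,0)} has no singleton blocks. -/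

import Mathlib

open scoped BigOperators

namespace SWOSP
noncomputable section

/-- `(-1)^b` as a complex number. -/
def sgn (b : Bool) : ℂ := if b then -1 else 1

/-! ## The index set of the standard basis of `V` -/

/-- The index set `I`.  `none` is the extra index `0` (only present in the odd
case); `some (Sum.inl k)` is the unbarred index `k+1` and `some (Sum.inr k)` is
the barred index `(k+1)̄`. -/
abbrev Idx (m n : ℕ) (odd : Bool) : Type :=
  {x : Option (Fin (m + n) ⊕ Fin (m + n)) // x = none → odd = true}

/-- The parity of the basis vector `v_i`: even iff `‖i‖ ≤ m`. -/
def parI {m n : ℕ} {odd : Bool} (i : Idx m n odd) : Bool :=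
  match i.1 with
  | none => false
  | some (Sum.inl k) => decide (m ≤ (k : ℕ))
  | some (Sum.inr k) => decide (m ≤ (k : ℕ))

/-- The absolute value `‖i‖` of an index. -/
def absI {m n : ℕ} {odd : Bool} (i : Idx m n odd) : ℕ :=
  match i.1 with
  | none => 0
  | some (Sum.inl k) => (k : ℕ) + 1
  | some (Sum.inr k) => (k : ℕ) + 1

/-- The supersymmetric bilinear form on basis vectors. -/
def formB {m n : ℕ} {odd : Bool} (i j : Idx m n odd) : ℂ :=
  match i.1, j.1 with
  | none, none => 1
  | some (Sum.inl k), some (Sum.inr l) => if k = l then 1 else 0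
  | some (Sum.inr k), some (Sum.inl l) =>
      if k = l then (if (k : ℕ) < m then 1 else -1) else 0
  | _, _ => 0

/-- The bar involution on indices. -/
def barI {m n : ℕ} {odd : Bool} (i : Idx m n odd) : Idx m n odd :=
  match i with
  | ⟨none, h⟩ => ⟨none, h⟩
  | ⟨some (Sum.inl k), _⟩ => ⟨some (Sum.inr k), by simp⟩
  | ⟨some (Sum.inr k), _⟩ => ⟨some (Sum.inl k), by simp⟩

/-- The sign relating `v_i^*` to `v_{bar i}`:  `v_i^* = epsI i • v_{bar i}`. -/
def epsI {m n : ℕ} {odd : Bool} (i : Idx m n odd) : ℂ :=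
  match i.1 with
  | some (Sum.inr k) => if (k : ℕ) < m then 1 else -1
  | _ => 1

/-- Matrix expressing the right dual basis: `v_c^* = ∑ k, Cdual k c • v_k`. -/
def Cdual (m n : ℕ) (odd : Bool) : Matrix (Idx m n odd) (Idx m n odd) ℂ :=
  Matrix.of fun k c => if k = barI c then epsI c else 0

/-- The form as a matrix. -/
def formBM (m n : ℕ) (odd : Bool) : Matrix (Idx m n odd) (Idx m n odd) ℂ :=
  Matrix.of fun i j => formB i j

/-! ## Operators on tensor powers, over an arbitrary homogeneous basis -/

section general

variable {ι : Type} [Fintype ι] [DecidableEq ι]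

/-- The tensor power `V^{⊗ d}`, realised as functions on `d`-tuples of basis
indices (the coordinates with respect to the standard basis of tensors). -/
abbrev TensG (ι : Type) (d : ℕ) : Type := (Fin d → ι) → ℂ

/-- The matrix (in the standard basis of `V^{⊗d}`) of the super-flip
`s_{i+1} = id^{⊗ i} ⊗ σ ⊗ id^{⊗(d-i-2)}`, `σ (v ⊗ w) = (-1)^{|v||w|} w ⊗ v`,
acting on the `(i+1)`-st and `(i+2)`-nd tensor factors (0-based positions `i`, `i+1`).
`p` is the parity function of the basis. -/
def sMatG (d : ℕ) (p : ι → Bool) (i : ℕ) (h : i + 1 < d) :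
    Matrix (Fin d → ι) (Fin d → ι) ℂ :=
  Matrix.of fun out inp =>
    if (∀ j : Fin d, (j : ℕ) ≠ i → (j : ℕ) ≠ i + 1 → out j = inp j)
        ∧ out ⟨i, Nat.lt_of_succ_lt h⟩ = inp ⟨i + 1, h⟩
        ∧ out ⟨i + 1, h⟩ = inp ⟨i, Nat.lt_of_succ_lt h⟩
    then sgn (p (inp ⟨i, Nat.lt_of_succ_lt h⟩) && p (inp ⟨i + 1, h⟩))
    else 0

/-- The matrix of `e_{i+1} = id^{⊗ i} ⊗ τ ⊗ id^{⊗(d-i-2)}` where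
`τ(v ⊗ w) = ⟨v,w⟩ ∑_c (-1)^{|v_c|} v_c ⊗ v_c^*`; here `B` is the matrix of the
bilinear form on the basis and `C` the matrix of the right dual basis,
`v_c^* = ∑ k, C k c • v_k`. -/
def eMatG (d : ℕ) (p : ι → Bool) (B C : Matrix ι ι ℂ) (i : ℕ) (h : i + 1 < d) :
    Matrix (Fin d → ι) (Fin d → ι) ℂ :=
  Matrix.of fun out inp =>
    if ∀ j : Fin d, (j : ℕ) ≠ i → (j : ℕ) ≠ i + 1 → out j = inp j
    then B (inp ⟨i, Nat.lt_of_succ_lt h⟩) (inp ⟨i + 1, h⟩)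
          * sgn (p (out ⟨i, Nat.lt_of_succ_lt h⟩))
          * C (out ⟨i + 1, h⟩) (out ⟨i, Nat.lt_of_succ_lt h⟩)
    else 0

/-- The matrix of the action of a homogeneous element `X` (a matrix in the basis
of `V`, with parity `px`) on `V^{⊗ d}` via the super Leibniz rule
`X.(w₁ ⊗ ⋯ ⊗ w_d) = ∑ i (-1)^{(|w₁|+⋯+|w_{i-1}|)|X|} w₁ ⊗ ⋯ ⊗ X w_i ⊗ ⋯ ⊗ w_d`. -/
def rhoMatG (d : ℕ) (p : ι → Bool) (X : Matrix ι ι ℂ) (px : Bool) :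
    Matrix (Fin d → ι) (Fin d → ι) ℂ :=
  Matrix.of fun out inp => ∑ pos : Fin d,
    if ∀ j, j ≠ pos → out j = inp j then
      (if px then ∏ j ∈ Finset.univ.filter (fun j : Fin d => j < pos),
          sgn (p (inp j)) else 1)
        * X (out pos) (inp pos)
    else 0

/-- `X` is homogeneous of parity `px` with respect to the basis parity `p`
(membership in `gl(V)_{px}`). -/
def IsHomogG (p : ι → Bool) (X : Matrix ι ι ℂ) (px : Bool) : Prop :=
  ∀ i j, X i j ≠ 0 → xor (p i) (p j) = px

/-- `X` is a homogeneous element of `osp(V)` of parity `px`:  it is homogeneous and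
satisfies `⟨X v, w⟩ + (-1)^{|X||v|} ⟨v, X w⟩ = 0` on basis vectors. -/
def IsOspHomogG (p : ι → Bool) (B : Matrix ι ι ℂ) (X : Matrix ι ι ℂ) (px : Bool) : Prop :=
  IsHomogG p X px ∧
    ∀ j l, (∑ a, X a j * B a l) + sgn (px && p j) * (∑ a, X a l * B j a) = 0

end general

/-- `V^{⊗d}` for the concrete space `V` with `sdim V = 2m+1|2n` (odd) or `2m|2n` (even). -/
abbrev Tens (m n : ℕ) (odd : Bool) (d : ℕ) : Type := TensG (Idx m n odd) d

/-! ## The Brauer algebra, by generators and relations -/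

/-- Generators of the Brauer algebra `Br_d(δ)`: `S i` is the transposition
generator `s_{i+1}` and `E i` the Temperley–Lieb type generator `e_{i+1}`
(`0`-based, so `i` ranges over `i + 1 < d`, matching `1 ≤ i+1 ≤ d-1`). -/
inductive BrGen (d : ℕ) : Type where
  | S : {i : ℕ // i + 1 < d} → BrGen d
  | E : {i : ℕ // i + 1 < d} → BrGen d

/-- The generator `s` inside the free algebra. -/
def σg (d : ℕ) (i : {i : ℕ // i + 1 < d}) : FreeAlgebra ℂ (BrGen d) :=
  FreeAlgebra.ι ℂ (BrGen.S i)

/-- The generator `e` inside the free algebra. -/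
def εg (d : ℕ) (i : {i : ℕ // i + 1 < d}) : FreeAlgebra ℂ (BrGen d) :=
  FreeAlgebra.ι ℂ (BrGen.E i)

/-- The defining relations of the Brauer algebra `Br_d(δ)`. -/
inductive BrauerRel (d : ℕ) (δ : ℂ) :
    FreeAlgebra ℂ (BrGen d) → FreeAlgebra ℂ (BrGen d) → Prop where
  | s_sq (i) : BrauerRel d δ (σg d i * σg d i) 1
  | s_comm (i j) (h : i.1 + 1 < j.1) :
      BrauerRel d δ (σg d i * σg d j) (σg d j * σg d i)
  | braid (i j) (h : j.1 = i.1 + 1) :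
      BrauerRel d δ (σg d i * σg d j * σg d i) (σg d j * σg d i * σg d j)
  | e_sq (i) : BrauerRel d δ (εg d i * εg d i) (δ • εg d i)
  | e_comm (i j) (h : i.1 + 1 < j.1) :
      BrauerRel d δ (εg d i * εg d j) (εg d j * εg d i)
  | e_jones₁ (i j) (h : j.1 = i.1 + 1) :
      BrauerRel d δ (εg d i * εg d j * εg d i) (εg d i)
  | e_jones₂ (i j) (h : j.1 = i.1 + 1) :
      BrauerRel d δ (εg d j * εg d i * εg d j) (εg d j)
  | se (i) : BrauerRel d δ (σg d i * εg d i) (εg d i)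
  | es (i) : BrauerRel d δ (εg d i * σg d i) (εg d i)
  | ses₁ (i j) (h : j.1 = i.1 + 1) :
      BrauerRel d δ (σg d i * εg d j * εg d i) (σg d j * εg d i)
  | ses₂ (i j) (h : j.1 = i.1 + 1) :
      BrauerRel d δ (σg d j * εg d i * εg d j) (σg d i * εg d j)

/-- The Brauer algebra `Br_d(δ)`. -/
abbrev BrauerAlg (d : ℕ) (δ : ℂ) : Type := RingQuot (BrauerRel d δ)

/-- The generator `s_{i+1}` of the Brauer algebra. -/
noncomputable def brS (d : ℕ) (δ : ℂ) (i : {i : ℕ // i + 1 < d}) : BrauerAlg d δ :=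
  RingQuot.mkAlgHom ℂ (BrauerRel d δ) (σg d i)

/-- The generator `e_{i+1}` of the Brauer algebra. -/
noncomputable def brE (d : ℕ) (δ : ℂ) (i : {i : ℕ // i + 1 < d}) : BrauerAlg d δ :=
  RingQuot.mkAlgHom ℂ (BrauerRel d δ) (εg d i)

/-! ## (Generalized) Brauer diagrams as functions on vertices -/

/-- Vertices of a diagram with `dt` top and `ds` bottom vertices, and the
diagram itself as a function (an involution; fixed points are singleton blocks). -/
abbrev GDg (dt ds : ℕ) : Type := Fin dt ⊕ Fin ds → Fin dt ⊕ Fin ds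

/-- Diagrams with the same number `d` of top and bottom vertices. -/
abbrev DgFun (d : ℕ) : Type := GDg d d

/-- A genuine Brauer diagram: an involution without fixed points (all blocks
have exactly two elements). -/
def IsBrauerDiag (d : ℕ) (f : DgFun d) : Prop :=
  Function.Involutive f ∧ ∀ x, f x ≠ x

/-- The identity Brauer diagram, connecting `j` with `j*`. -/
def idDiag (d : ℕ) : DgFun d := Sum.swap

/-- The Brauer diagram `s_{i+1}` (0-based `i`). -/
def sFun (d i : ℕ) (h : i + 1 < d) : DgFun d :=
  fun x =>
    match x with
    | Sum.inl j => Sum.inr (Equiv.swap (⟨i, Nat.lt_of_succ_lt h⟩ : Fin d) ⟨i + 1, h⟩ j)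
    | Sum.inr j => Sum.inl (Equiv.swap (⟨i, Nat.lt_of_succ_lt h⟩ : Fin d) ⟨i + 1, h⟩ j)

/-- The Brauer diagram `e_{i+1}` (0-based `i`). -/
def eFun (d i : ℕ) (h : i + 1 < d) : DgFun d :=
  fun x =>
    match x with
    | Sum.inl j =>
        if (j : ℕ) = i then Sum.inl ⟨i + 1, h⟩
        else if (j : ℕ) = i + 1 then Sum.inl ⟨i, Nat.lt_of_succ_lt h⟩
        else Sum.inr j
    | Sum.inr j =>
        if (j : ℕ) = i then Sum.inr ⟨i + 1, h⟩
        else if (j : ℕ) = i + 1 then Sum.inr ⟨i, Nat.lt_of_succ_lt h⟩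
        else Sum.inl j

/-! ## Stacking diagrams: composition and circle count -/

section stacking

variable (d1 d2 d3 : ℕ)

/-- Vertices of the stacked picture: top row (`Fin d3`), middle row (`Fin d2`),
bottom row (`Fin d1`). -/
abbrev StackV : Type := Fin d3 ⊕ (Fin d2 ⊕ Fin d1)

/-- The vertices of the upper diagram (from `d2` to `d3`) inside the stack. -/
def vTM : Fin d3 ⊕ Fin d2 → StackV d1 d2 d3 := Sum.map id Sum.inl

/-- The vertices of the lower diagram (from `d1` to `d2`) inside the stack. -/
def vMB : Fin d2 ⊕ Fin d1 → StackV d1 d2 d3 := Sum.inr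

/-- The outer vertices (top and bottom row) inside the stack. -/
def vOut : Fin d3 ⊕ Fin d1 → StackV d1 d2 d3 := Sum.map id Sum.inr

/-- The relation on the stacked picture generated by the strands of the lower
diagram `b1` (from `d1` to `d2`) and the upper diagram `b2` (from `d2` to `d3`). -/
def stackRel (b1 : GDg d2 d1) (b2 : GDg d3 d2) :
    StackV d1 d2 d3 → StackV d1 d2 d3 → Prop := fun x y =>
  (∃ u, x = vTM d1 d2 d3 u ∧ y = vTM d1 d2 d3 (b2 u)) ∨
  (∃ u, x = vMB d1 d2 d3 u ∧ y = vMB d1 d2 d3 (b1 u))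

/-- Two stacked vertices are connected. -/
def StackEq (b1 : GDg d2 d1) (b2 : GDg d3 d2) :
    StackV d1 d2 d3 → StackV d1 d2 d3 → Prop :=
  Relation.EqvGen (stackRel d1 d2 d3 b1 b2)

/-- `b3` is the composite diagram `b2 ∘ b1` obtained by stacking `b2` on top of
`b1`, eliminating the middle row (and with it all internal `∘`'s and circles):
two distinct outer vertices are joined in `b3` iff they are connected through
the stack. -/
def IsCompositeG (b1 : GDg d2 d1) (b2 : GDg d3 d2) (b3 : GDg d3 d1) : Prop :=
  ∀ x y : Fin d3 ⊕ Fin d1, x ≠ y →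
    (b3 x = y ↔ StackEq d1 d2 d3 b1 b2 (vOut d1 d2 d3 x) (vOut d1 d2 d3 y))

/-- The number of internal circles removed when stacking `b2` on top of `b1`:
the number of connected components of the stack that lie entirely in the middle
row and have at least two vertices. -/
def circNum (b1 : GDg d2 d1) (b2 : GDg d3 d2) : ℕ :=
  Nat.card (Quotient (Setoid.comap
    (fun j : {j : Fin d2 //
        (∀ x : Fin d3 ⊕ Fin d1,
          ¬ StackEq d1 d2 d3 b1 b2 (Sum.inr (Sum.inl j)) (vOut d1 d2 d3 x)) ∧
        ∃ j' : Fin d2, j' ≠ j ∧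
          StackEq d1 d2 d3 b1 b2 (Sum.inr (Sum.inl j)) (Sum.inr (Sum.inl j'))} =>
      (Sum.inr (Sum.inl j.1) : StackV d1 d2 d3))
    (Relation.EqvGen.setoid (stackRel d1 d2 d3 b1 b2))))

end stacking

/-- `c` is a subdiagram of `b`: every block of `c` is a block of `b` or a
singleton obtained by removing an arc of `b`. -/
def subDiagOf {dt ds : ℕ} (c b : GDg dt ds) : Prop := ∀ x, c x = x ∨ c x = b x

/-- The number of vertical strands (blocks `{i, j*}`) of a diagram. -/
def vCount (d : ℕ) (c : DgFun d) : ℕ :=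
  (Finset.univ.filter fun i : Fin d => (c (Sum.inl i)).isRight = true).card

/-- The number of singleton blocks of a diagram. -/
def fixCount (d : ℕ) (c : DgFun d) : ℕ :=
  (Finset.univ.filter fun x : Fin d ⊕ Fin d => c x = x).card

/-! ## Orientations -/

/-- Orientation symbols: `∧`, `∨`, `∘`. -/
inductive Or3 : Type where
  | up : Or3
  | down : Or3
  | circ : Or3
  deriving DecidableEq

instance instFintypeOr3 : Fintype Or3 :=
  ⟨{Or3.up, Or3.down, Or3.circ}, fun x => by cases x <;> simp⟩

/-- `(t, b, s)` is an oriented generalized Brauer diagram with orientation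
sequence `t` on top and `s` at the bottom. -/
def OrientedGBD (dt ds : ℕ) (t : Fin dt → Or3) (s : Fin ds → Or3)
    (b : GDg dt ds) : Prop :=
  Function.Involutive b ∧
  (∀ i j : Fin dt, i ≠ j → b (Sum.inl i) = Sum.inl j →
      ((t i = Or3.up ∧ t j = Or3.down) ∨ (t i = Or3.down ∧ t j = Or3.up))) ∧
  (∀ i j : Fin ds, i ≠ j → b (Sum.inr i) = Sum.inr j →
      ((s i = Or3.up ∧ s j = Or3.down) ∨ (s i = Or3.down ∧ s j = Or3.up))) ∧
  (∀ (i : Fin dt) (j : Fin ds), b (Sum.inl i) = Sum.inr j →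
      t i = s j ∧ t i ≠ Or3.circ) ∧
  (∀ i : Fin dt, b (Sum.inl i) = Sum.inl i → t i = Or3.circ) ∧
  (∀ i : Fin ds, b (Sum.inr i) = Sum.inr i → s i = Or3.circ)

/-- Whether a basis index of `V` belongs to the summand labelled by an
orientation symbol (`∧ ↦ W_∧`, `∨ ↦ W_∨`, `∘ ↦ W_∘`). -/
def matchB {m n : ℕ} {odd : Bool} (x : Idx m n odd) (o : Or3) : Bool :=
  match o, x.1 with
  | Or3.up, some (Sum.inl _) => true
  | Or3.down, some (Sum.inr _) => true
  | Or3.circ, none => true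
  | _, _ => false

/-- The identity morphism of the object `s`: vertical strands at the non-`∘`
positions, singletons at the `∘` positions. -/
def idGDiag (d : ℕ) (s : Fin d → Or3) : DgFun d := fun x =>
  match x with
  | Sum.inl j => if s j = Or3.circ then Sum.inl j else Sum.inr j
  | Sum.inr j => if s j = Or3.circ then Sum.inr j else Sum.inl j

/-! ## The weight of a labelled oriented diagram and the functor `F` -/

/-- Position of a vertex when the diagram is drawn in the plane and the
boundary is traversed counterclockwise (bottom row left to right, then top row
right to left).  Two strands cross (mod 2) iff their endpoints interleave. -/
def posV (dt ds : ℕ) : Fin dt ⊕ Fin ds → ℕ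
  | Sum.inl k => ds + (dt - 1 - (k : ℕ))
  | Sum.inr k => (k : ℕ)

/-- The product of the signs `(-1)^{|i||j|}` over all crossings of two strands
labelled `i` and `j`. -/
def crossSgn {m n : ℕ} {odd : Bool} (dt ds : ℕ) (b : GDg dt ds)
    (L : Fin dt ⊕ Fin ds → Idx m n odd) : ℂ :=
  ∏ x : Fin dt ⊕ Fin ds, ∏ y : Fin dt ⊕ Fin ds,
    if posV dt ds x < posV dt ds (b x) ∧ posV dt ds y < posV dt ds (b y)
        ∧ posV dt ds x < posV dt ds y
        ∧ Xor (posV dt ds x < posV dt ds y ∧ posV dt ds y < posV dt ds (b x))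
            (posV dt ds x < posV dt ds (b y) ∧ posV dt ds (b y) < posV dt ds (b x))
    then sgn (parI (L x) && parI (L y)) else 1

/-- `(-1)` for every clockwise cap with large labels. -/
def capSgn {m n : ℕ} {odd : Bool} (dt ds : ℕ) (s : Fin ds → Or3) (b : GDg dt ds)
    (js : Fin ds → Idx m n odd) : ℂ :=
  ∏ i : Fin ds, ∏ j : Fin ds,
    if (i : ℕ) < (j : ℕ) ∧ b (Sum.inr i) = Sum.inr j ∧ s i = Or3.up ∧ m < absI (js i)
    then -1 else 1

/-- `(-1)` for every anticlockwise cup with large labels. -/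
def cupSgn {m n : ℕ} {odd : Bool} (dt ds : ℕ) (t : Fin dt → Or3) (b : GDg dt ds)
    (jt : Fin dt → Idx m n odd) : ℂ :=
  ∏ i : Fin dt, ∏ j : Fin dt,
    if (i : ℕ) < (j : ℕ) ∧ b (Sum.inl i) = Sum.inl j ∧ t i = Or3.down ∧ m < absI (jt i)
    then -1 else 1

/-- The weight `wt(b_ĩ^j̃)` of the diagram `b` with top labels `jt` and bottom
labels `js`: zero unless the labels match the orientations and are consistent
(constant absolute value on each block), and otherwise the product of the
crossing, cap and cup signs. -/
def wtD (m n : ℕ) (odd : Bool) (dt ds : ℕ) (t : Fin dt → Or3) (s : Fin ds → Or3)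
    (b : GDg dt ds) (jt : Fin dt → Idx m n odd) (js : Fin ds → Idx m n odd) : ℂ :=
  if (∀ k, matchB (js k) (s k) = true) ∧ (∀ k, matchB (jt k) (t k) = true) ∧
      (∀ x, absI (Sum.elim jt js (b x)) = absI (Sum.elim jt js x))
  then crossSgn dt ds b (Sum.elim jt js) * capSgn dt ds s b js * cupSgn dt ds t b jt
  else 0

/-- The matrix of `F(b) : W_s → W_t` in the standard bases. -/
def FMat (m n : ℕ) (odd : Bool) (dt ds : ℕ) (t : Fin dt → Or3) (s : Fin ds → Or3)
    (b : GDg dt ds) : Matrix (Fin dt → Idx m n odd) (Fin ds → Idx m n odd) ℂ :=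
  Matrix.of fun jt js => wtD m n odd dt ds t s b jt js

/-- The linear map `F(b)`. -/
def Flin (m n : ℕ) (odd : Bool) (dt ds : ℕ) (t : Fin dt → Or3) (s : Fin ds → Or3)
    (b : GDg dt ds) : Tens m n odd ds →ₗ[ℂ] Tens m n odd dt :=
  Matrix.toLin' (FMat m n odd dt ds t s b)

/-- The space of endomorphisms of `⊕_s s` in the additive closure of the
oriented Brauer category: matrices of formal linear combinations of diagrams;
`F s t c` is the coefficient of the diagram `c ∈ Hom(s,t)` in the component
`(t, s)` of the matrix. -/
abbrev EndSp (d : ℕ) : Type := (Fin d → Or3) → (Fin d → Or3) → DgFun d → ℂ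

/-- The matrix of `Θ(F)` acting on `V^{⊗ d} = ⊕_s W_s`. -/
def ThetaMat (m n : ℕ) (odd : Bool) (d : ℕ) (F : EndSp d) :
    Matrix (Fin d → Idx m n odd) (Fin d → Idx m n odd) ℂ :=
  Matrix.of fun out inp =>
    ∑ s : Fin d → Or3, ∑ t : Fin d → Or3, ∑ c : DgFun d,
      F s t c * wtD m n odd d d t s c out inp

open Classical in
/-- The element `M(b)` of `End(⊕_s s)` attached to a Brauer diagram `b`:
its `(t,s)`-entry is the unique subdiagram of `b` that is an oriented diagram
from `s` to `t` (and `0` if there is none).  In the even case (`odd = false`)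
only `∘`-free orientation sequences are allowed. -/
def MOf (d : ℕ) (odd : Bool) (b : DgFun d) : EndSp d := fun s t c =>
  if (odd = false → (∀ j, s j ≠ Or3.circ) ∧ (∀ j, t j ≠ Or3.circ)) ∧
      subDiagOf c b ∧ OrientedGBD d d t s c
  then 1 else 0

open Classical in
/-- Multiplication (composition) in `End(⊕_s s)`: `convE δc F G` is "`F` after
`G`", composing diagrams by stacking with a factor `δc` for each removed
internal circle. -/
def convE (d : ℕ) (δc : ℂ) (F G : EndSp d) : EndSp d := fun s u c =>
  ∑ t : Fin d → Or3, ∑ b1 : DgFun d, ∑ b2 : DgFun d,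
    F t u b2 * G s t b1 *
      (if OrientedGBD d d t s b1 ∧ OrientedGBD d d u t b2 ∧
          IsCompositeG d d d b1 b2 c
       then δc ^ circNum d d d b1 b2 else 0)

open Classical in
/-- The identity element of `End(⊕_s s)` (in the even case restricted to the
`∘`-free objects). -/
def idE (d : ℕ) (odd : Bool) : EndSp d := fun s t c =>
  if (odd = false → ∀ j, s j ≠ Or3.circ) ∧ s = t ∧
      c = (fun x => match x with
            | Sum.inl j => if s j = Or3.circ then Sum.inl j else Sum.inr j
            | Sum.inr j => if s j = Or3.circ then Sum.inr j else Sum.inl j)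
  then 1 else 0

/-! ## The embedding of `gl(m|n)` -/

/-- Parity of the index `k+1` for `gl(m|n)`. -/
def pF (m n : ℕ) (k : Fin (m + n)) : Bool := decide (m ≤ (k : ℕ))

/-- A matrix in `gl(m|n)` is homogeneous of parity `px`. -/
def IsHomogF (m n : ℕ) (g : Matrix (Fin (m + n)) (Fin (m + n)) ℂ) (px : Bool) : Prop :=
  ∀ i j, g i j ≠ 0 → xor (pF m n i) (pF m n j) = px

/-- The embedding `ι : gl(m|n) → osp(V)`: `g` acts by `g` on the span `W_∧` of
the unbarred vectors, by the dual of `g` on the span `W_∨` of the barred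
vectors, and by `0` on `v_0`. -/
def glEmb (m n : ℕ) (odd : Bool) (g : Matrix (Fin (m + n)) (Fin (m + n)) ℂ) :
    Matrix (Idx m n odd) (Idx m n odd) ℂ :=
  Matrix.of fun x y =>
    match x.1, y.1 with
    | some (Sum.inl a), some (Sum.inl b) => g a b
    | some (Sum.inr a), some (Sum.inr b) =>
        (if (a : ℕ) < m ∧ m ≤ (b : ℕ) then 1 else -1) * g b a
    | _, _ => 0

/-- The matrix of the dual of the natural representation of `gl(m|n)` in the
basis `(w_i)`: `E_{i,j} w_k = -δ_{i,k} (-1)^{(|i|+|j|)|i|} w_j`. -/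
def dualMat (m n : ℕ) (g : Matrix (Fin (m + n)) (Fin (m + n)) ℂ) :
    Matrix (Fin (m + n)) (Fin (m + n)) ℂ :=
  Matrix.of fun a b => -(sgn (xor (pF m n a) (pF m n b) && pF m n b)) * g b a

/-! ## Coordinate subspaces -/

/-- The subspace of coordinate vectors supported on `{x | P x}`. -/
def suppSub {κ : Type} (P : κ → Prop) : Submodule ℂ (κ → ℂ) where
  carrier := {f | ∀ x, ¬ P x → f x = 0}
  add_mem' := by
    intro a b ha hb x hx
    simp only [Pi.add_apply, ha x hx, hb x hx, add_zero]
  zero_mem' := fun x _ => rfl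
  smul_mem' := by
    intro c f hf x hx
    simp only [Pi.smul_apply, hf x hx, smul_zero]

/-- `W_∧`, the span of the unbarred basis vectors. -/
def Wup (m n : ℕ) (odd : Bool) : Submodule ℂ (Idx m n odd → ℂ) :=
  suppSub (fun x => ∃ k, x.1 = some (Sum.inl k))

/-- `W_∨`, the span of the barred basis vectors. -/
def Wdn (m n : ℕ) (odd : Bool) : Submodule ℂ (Idx m n odd → ℂ) :=
  suppSub (fun x => ∃ k, x.1 = some (Sum.inr k))

/-- `W_∘`, the span of `v_0` (zero in the even case). -/
def Wo (m n : ℕ) (odd : Bool) : Submodule ℂ (Idx m n odd → ℂ) :=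
  suppSub (fun x => x.1 = none)

/-- The summand `W_s = W_{s_1} ⊗ ⋯ ⊗ W_{s_d}` of `V^{⊗ d}`. -/
def Wseq (m n : ℕ) (odd : Bool) (d : ℕ) (s : Fin d → Or3) :
    Submodule ℂ (Tens m n odd d) :=
  suppSub (fun v => ∀ k, matchB (v k) (s k) = true)

/-- The matrix of the signed permutation action of `σ ∈ S_d` on `V^{⊗ d}`:
the tensor factor in position `j` is moved to position `σ j`, with the sign
`∏ (-1)^{|v_a||v_b|}` over the inversions of `σ`. -/
def permMat (m n : ℕ) (odd : Bool) (d : ℕ) (σ : Equiv.Perm (Fin d)) :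
    Matrix (Fin d → Idx m n odd) (Fin d → Idx m n odd) ℂ :=
  Matrix.of fun out inp =>
    if ∀ j, out (σ j) = inp j then
      ∏ a : Fin d, ∏ b : Fin d,
        if a < b ∧ σ b < σ a then sgn (parI (inp a) && parI (inp b)) else 1
    else 0

end
end SWOSP

/-!
Let `c` be a diagram with nonzero coefficient and a singleton `z`. Label its vertices by basis
indices so that distinct arcs get distinct absolute values, singletons get `v₀`, and the absolute
value `a + 1 = m + n` stays unused (`c` has fewer than `d ≤ m + n` arcs). Relabel `z` by `v_a`
(top row) or `v_ā` (bottom row) and compare the entries of `Θ(f) ρ(X)` and `ρ(X) Θ(f)` between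
the two rows, for `X = E_{a,0} - E_{0,ā} ∈ osp(V)`. A diagram contributes only through labels of
nonzero weight for it, and the labels that occur determine the diagram: it is either `c` itself,
which contributes to exactly one of the two sides, or `c` with `z` joined to another singleton.
Hence some joined diagram has a nonzero coefficient; iterating `r` times gives the chain.
-/

section Involution

open Finset

lemma Function.Involutive.two_mul_card_lt_apply_add_card_fixed_le {α : Type*} [Fintype α]
    [LinearOrder α] {c : α → α} (hc : Function.Involutive c) :
    2 * #{x | x < c x} + #{x | c x = x} ≤ Fintype.card α := by
  have hdisj : Disjoint ({x | x < c x} : Finset α) (({x | x < c x} : Finset α).image c) := by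
    refine disjoint_left.2 fun x hx hx' => ?_
    obtain ⟨y, hy, rfl⟩ := mem_image.1 hx'
    simp only [mem_filter, mem_univ, true_and, hc y] at hx hy
    exact lt_asymm hx hy
  have hsub : ({x | x < c x} : Finset α) ∪ ({x | x < c x} : Finset α).image c ⊆
      ({x | ¬ c x = x} : Finset α) := by
    intro x hx
    simp only [mem_union, mem_image, mem_filter, mem_univ, true_and] at hx ⊢
    rcases hx with hx | ⟨y, hy, rfl⟩
    · exact hx.ne'
    · rw [hc y]; exact hy.ne
  have h1 := card_le_card hsub
  rw [card_union_of_disjoint hdisj, card_image_of_injective _ hc.injective] at h1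
  have h2 := card_filter_add_card_filter_not (s := univ) (fun x => c x = x)
  rw [card_univ] at h2
  omega

lemma Function.Involutive.exists_arc_numbering {α : Type*} [Fintype α] [DecidableEq α]
    {c : α → α} (hc : Function.Involutive c) :
    ∃ g : α → ℕ, (∀ x, g (c x) = g x) ∧
      (∀ x, c x ≠ x → 2 * g x + 2 + #{x | c x = x} ≤ Fintype.card α) ∧
      ∀ x y, c x ≠ x → c y ≠ y → g x = g y → y = x ∨ y = c x := by
  let _ : LinearOrder α := LinearOrder.lift' _ (Fintype.equivFin α).injective
  let A : Finset α := {x | x < c x}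
  have hA : 2 * #A + #{x | c x = x} ≤ Fintype.card α := by
    convert hc.two_mul_card_lt_apply_add_card_fixed_le using 4
  have hmin_mem : ∀ x, c x ≠ x → min x (c x) ∈ A := fun x hx => by
    simp only [A, mem_filter, mem_univ, true_and]
    rcases min_choice x (c x) with h | h
    · have hle := min_le_right x (c x)
      rw [h] at hle ⊢
      exact lt_of_le_of_ne hle hx.symm
    · have hle := min_le_left x (c x)
      rw [h] at hle
      rw [h, hc x]
      exact lt_of_le_of_ne hle hx
  refine ⟨fun x => if h : min x (c x) ∈ A then A.equivFin ⟨_, h⟩ else 0, fun x => by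
    simp only [hc x, min_comm], fun x hx => ?_, fun x y hx hy hxy => ?_⟩
  · simp only [dif_pos (hmin_mem x hx)]
    have := (A.equivFin ⟨_, hmin_mem x hx⟩).isLt
    omega
  · simp only [dif_pos (hmin_mem x hx), dif_pos (hmin_mem y hy)] at hxy
    have hr : min x (c x) = min y (c y) :=
      congrArg Subtype.val (A.equivFin.injective (Fin.ext hxy))
    rcases min_choice x (c x) with h1 | h1 <;> rcases min_choice y (c y) with h2 | h2 <;>
      rw [h1, h2] at hr
    · exact .inl hr.symm
    · exact .inr (by rw [hr, hc y])
    · exact .inr hr.symm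
    · exact .inl (hc.injective hr).symm

end Involution

theorem exists_chain_of_step {α : Type*} {P : ℕ → α → Prop} {R : α → α → Prop}
    (step : ∀ q x, P (q + 1) x → ∃ y, P q y ∧ R x y) (r : ℕ) (x : α) (hx : P r x) :
    ∃ B : ℕ → α, B r = x ∧ (∀ i ≤ r, P i (B i)) ∧
      ∀ i < r, R (B (i + 1)) (B i) := by
  induction r generalizing x with
  | zero =>
    refine ⟨fun _ => x, rfl, fun i hi => ?_, fun i hi => absurd hi (Nat.not_lt_zero i)⟩
    obtain rfl := Nat.le_zero.1 hi
    exact hx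
  | succ q ih =>
    obtain ⟨y, hy, hxy⟩ := step q x hx
    obtain ⟨B, hB, hP, hR⟩ := ih y hy
    refine ⟨Function.update B (q + 1) x, Function.update_self .., fun i hi => ?_,
      fun i hi => ?_⟩
    · rcases Nat.lt_or_eq_of_le hi with hi | rfl
      · rw [Function.update_of_ne hi.ne]
        exact hP i (Nat.lt_succ_iff.1 hi)
      · rw [Function.update_self]
        exact hx
    · rcases Nat.lt_or_eq_of_le (Nat.lt_succ_iff.1 hi) with hi | rfl
      · rw [Function.update_of_ne (by omega), Function.update_of_ne (by omega)]
        exact hR i hi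
      · rw [Function.update_self, Function.update_of_ne (by omega), hB]
        exact hxy

namespace SWOSP
noncomputable section

lemma sgn_ne_zero (b : Bool) : sgn b ≠ 0 := by cases b <;> simp [sgn]

section Labels

variable {m n : ℕ}

def idxZero : Idx m n true := ⟨none, fun _ => rfl⟩

def idxUp (a : Fin (m + n)) : Idx m n true := ⟨some (.inl a), nofun⟩

def idxDown (a : Fin (m + n)) : Idx m n true := ⟨some (.inr a), nofun⟩

@[simp] lemma absI_idxZero : absI (idxZero : Idx m n true) = 0 := rfl

@[simp] lemma absI_idxUp (a : Fin (m + n)) : absI (idxUp a) = a + 1 := rfl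

@[simp] lemma absI_idxDown (a : Fin (m + n)) : absI (idxDown a) = a + 1 := rfl

lemma absI_eq_zero_iff {x : Idx m n true} : absI x = 0 ↔ x = idxZero := by
  obtain ⟨_ | _ | _, _⟩ := x <;> simp [absI, idxZero]

lemma matchB_circ_iff {x : Idx m n true} : matchB x .circ = true ↔ x = idxZero := by
  obtain ⟨_ | _ | _, _⟩ := x <;> simp [matchB, idxZero]

lemma eq_of_matchB {odd : Bool} {x : Idx m n odd} {o o' : Or3} (h : matchB x o = true)
    (h' : matchB x o' = true) : o = o' := by
  obtain ⟨_ | _ | _, _⟩ := x <;> cases o <;> cases o' <;> simp_all [matchB]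

def orientedIdx : Or3 → Fin (m + n) → Idx m n true
  | .up, a => idxUp a
  | .down, a => idxDown a
  | .circ, _ => idxZero

lemma matchB_orientedIdx (o : Or3) (a : Fin (m + n)) : matchB (orientedIdx o a) o = true := by
  cases o <;> rfl

lemma absI_orientedIdx {o : Or3} (ho : o ≠ .circ) (a : Fin (m + n)) :
    absI (orientedIdx o a) = a + 1 := by
  cases o <;> first | rfl | exact absurd rfl ho

end Labels

section Fits

variable {m n : ℕ} {odd : Bool} {dt ds : ℕ}

lemma OrientedGBD.elim_eq_circ_iff {t : Fin dt → Or3} {s : Fin ds → Or3} {c : GDg dt ds}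
    (hor : OrientedGBD dt ds t s c) (x : Fin dt ⊕ Fin ds) :
    Sum.elim t s x = .circ ↔ c x = x := by
  obtain ⟨hinv, htt, hss, hts, htf, hsf⟩ := hor
  constructor
  · intro h
    by_contra hne
    rcases x with i | i <;> simp only [Sum.elim_inl, Sum.elim_inr] at h
    · rcases hc : c (.inl i) with j | j
      · have hij : i ≠ j := by rintro rfl; exact hne hc
        rcases htt i j hij hc with ⟨h1, -⟩ | ⟨h1, -⟩ <;> simp [h] at h1
      · exact (hts i j hc).2 h
    · rcases hc : c (.inr i) with j | j
      · have hji : c (.inl j) = .inr i := by rw [← hc, hinv]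
        exact (hts j i hji).2 ((hts j i hji).1.trans h)
      · have hij : i ≠ j := by rintro rfl; exact hne hc
        rcases hss i j hij hc with ⟨h1, -⟩ | ⟨h1, -⟩ <;> simp [h] at h1
  · rcases x with i | i
    exacts [htf i, hsf i]

def Fits (t : Fin dt → Or3) (s : Fin ds → Or3) (c : GDg dt ds)
    (L : Fin dt ⊕ Fin ds → Idx m n odd) : Prop :=
  (∀ x, matchB (L x) (Sum.elim t s x) = true) ∧ ∀ x, absI (L (c x)) = absI (L x)

lemma wtD_ne_zero_iff {t : Fin dt → Or3} {s : Fin ds → Or3} {c : GDg dt ds}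
    {jt : Fin dt → Idx m n odd} {js : Fin ds → Idx m n odd} :
    wtD m n odd dt ds t s c jt js ≠ 0 ↔ Fits t s c (Sum.elim jt js) := by
  unfold wtD Fits
  split_ifs with h
  · refine iff_of_true (mul_ne_zero (mul_ne_zero ?_ ?_) ?_)
      ⟨Sum.forall.2 ⟨h.2.1, h.1⟩, h.2.2⟩ <;>
      refine Finset.prod_ne_zero_iff.2 fun _ _ => Finset.prod_ne_zero_iff.2 fun _ _ => ?_ <;>
      split_ifs <;> simp [sgn_ne_zero]
  · exact iff_of_false (by simp) fun hfit =>
      h ⟨fun k => hfit.1 (.inr k), fun k => hfit.1 (.inl k), hfit.2⟩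

lemma Fits.orientation_eq {t t' : Fin dt → Or3} {s s' : Fin ds → Or3} {c c' : GDg dt ds}
    {L : Fin dt ⊕ Fin ds → Idx m n odd} (h : Fits t s c L) (h' : Fits t' s' c' L) :
    t = t' ∧ s = s' :=
  Sum.elim_eq_iff.1 (funext fun x => eq_of_matchB (h.1 x) (h'.1 x))

end Fits

section Separates

variable {m n dt ds : ℕ}

lemma Fits.eq_zero_iff {t : Fin dt → Or3} {s : Fin ds → Or3} {c : GDg dt ds}
    {L : Fin dt ⊕ Fin ds → Idx m n true} (hfit : Fits t s c L) (hor : OrientedGBD dt ds t s c)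
    (x : Fin dt ⊕ Fin ds) : L x = idxZero ↔ c x = x := by
  rw [← hor.elim_eq_circ_iff, ← matchB_circ_iff]
  exact ⟨fun h => eq_of_matchB (hfit.1 x) h, fun h => h ▸ hfit.1 x⟩

structure Separates (L : Fin dt ⊕ Fin ds → Idx m n true) (c : GDg dt ds) : Prop where
  eq_zero_iff : ∀ x, L x = idxZero ↔ c x = x
  eq_or_eq_of_absI_eq : ∀ x y, L x ≠ idxZero → absI (L x) = absI (L y) → y = x ∨ y = c x

lemma Fits.eq_of_separates {t : Fin dt → Or3} {s : Fin ds → Or3} {c c' : GDg dt ds}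
    {L : Fin dt ⊕ Fin ds → Idx m n true} (hfit : Fits t s c L) (hor : OrientedGBD dt ds t s c)
    (hsep : Separates L c') : c = c' := by
  funext x
  by_cases hx : L x = idxZero
  · rw [(hfit.eq_zero_iff hor x).1 hx, (hsep.eq_zero_iff x).1 hx]
  · refine (hsep.eq_or_eq_of_absI_eq x (c x) hx (hfit.2 x).symm).resolve_left fun h => hx ?_
    exact (hfit.eq_zero_iff hor x).2 h

lemma OrientedGBD.exists_separates {d : ℕ} (hd : d ≤ m + n) {t s : Fin d → Or3} {c : DgFun d}
    (hor : OrientedGBD d d t s c) (hfix : 0 < fixCount d c) :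
    ∃ L : Fin d ⊕ Fin d → Idx m n true,
      Fits t s c L ∧ Separates L c ∧ ∀ x, absI (L x) < m + n := by
  obtain ⟨g, hgc, hglt, hginj⟩ := hor.1.exists_arc_numbering
  have hg : ∀ x, c x ≠ x → g x + 1 < m + n := fun x hx => by
    have := hglt x hx
    simp only [fixCount, Fintype.card_sum, Fintype.card_fin] at hfix this
    omega
  have hmn : 0 < m + n := by
    obtain ⟨x, -⟩ := Finset.card_pos.1 hfix
    rcases x with i | i <;> exact lt_of_lt_of_le i.pos hd
  let L : Fin d ⊕ Fin d → Idx m n true := fun x =>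
    orientedIdx (Sum.elim t s x) ⟨g x % (m + n), Nat.mod_lt _ hmn⟩
  have habsL : ∀ x, c x ≠ x → absI (L x) = g x + 1 := fun x hx => by
    rw [absI_orientedIdx (mt (hor.elim_eq_circ_iff x).1 hx), Fin.val_mk,
      Nat.mod_eq_of_lt (by have := hg x hx; omega)]
  have hfits : Fits t s c L := by
    refine ⟨fun x => matchB_orientedIdx _ _, fun x => ?_⟩
    by_cases hx : c x = x
    · rw [hx]
    have hcx : c (c x) ≠ c x := by rw [hor.1 x]; exact Ne.symm hx
    rw [habsL _ hcx, habsL x hx, hgc]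
  refine ⟨L, hfits, ⟨hfits.eq_zero_iff hor, fun x y hx hxy => ?_⟩, fun x => ?_⟩
  · have hcx : c x ≠ x := mt (hfits.eq_zero_iff hor x).2 hx
    have hcy : c y ≠ y := by
      rw [Ne, ← hfits.eq_zero_iff hor, ← absI_eq_zero_iff, ← hxy, habsL x hcx]
      omega
    rw [habsL x hcx, habsL y hcy] at hxy
    exact hginj x y hcx hcy (by omega)
  · by_cases hx : c x = x
    · rw [(hfits.eq_zero_iff hor x).2 hx, absI_idxZero]; exact hmn
    · rw [habsL x hx]; exact hg x hx

end Separates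

section Join

variable {dt ds : ℕ} {c : GDg dt ds} {u v : Fin dt ⊕ Fin ds}

lemma comp_swap_apply_of_ne {x : Fin dt ⊕ Fin ds} (hxu : x ≠ u) (hxv : x ≠ v) :
    (c ∘ Equiv.swap u v) x = c x := by
  rw [Function.comp_apply, Equiv.swap_apply_of_ne_of_ne hxu hxv]

lemma subDiagOf_comp_swap (hu : c u = u) (hv : c v = v) : subDiagOf c (c ∘ Equiv.swap u v) := by
  intro x
  by_cases hxu : x = u
  · exact .inl (hxu ▸ hu)
  by_cases hxv : x = v
  · exact .inl (hxv ▸ hv)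
  exact .inr (comp_swap_apply_of_ne hxu hxv).symm

lemma comp_swap_ne (hu : c u = u) (hv : c v = v) (hvu : v ≠ u) : c ∘ Equiv.swap u v ≠ c :=
  fun h => hvu (by simpa [hu, hv] using congrFun h u)

variable {d : ℕ} {c : DgFun d} {u v : Fin d ⊕ Fin d}

lemma fixCount_comp_swap_add_two (hu : c u = u) (hv : c v = v) (huv : u ≠ v) :
    fixCount d (c ∘ Equiv.swap u v) + 2 = fixCount d c := by
  have hfix : (Finset.univ.filter fun x => (c ∘ Equiv.swap u v) x = x) =
      (Finset.univ.filter fun x => c x = x) \ {u, v} := by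
    ext x
    simp only [Finset.mem_filter, Finset.mem_sdiff, Finset.mem_univ, true_and,
      Finset.mem_insert, Finset.mem_singleton, not_or]
    by_cases hxu : x = u
    · subst hxu; simp [hv, huv.symm]
    by_cases hxv : x = v
    · subst hxv; simp [hu, huv]
    simp [Equiv.swap_apply_of_ne_of_ne hxu hxv, hxu, hxv]
  have hsub : ({u, v} : Finset _) ⊆ Finset.univ.filter fun x => c x = x := by
    simp [Finset.insert_subset_iff, hu, hv]
  have hcard := Finset.card_le_card hsub
  rw [Finset.card_pair huv] at hcard
  unfold fixCount
  rw [hfix, Finset.card_sdiff_of_subset hsub, Finset.card_pair huv]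
  omega

lemma vCount_le_comp_swap (hu : c u = u) (hv : c v = v) :
    vCount d c ≤ vCount d (c ∘ Equiv.swap u v) := by
  refine Finset.card_le_card fun i hi => ?_
  simp only [Finset.mem_filter, Finset.mem_univ, true_and] at hi ⊢
  have hiu : Sum.inl i ≠ u := by rintro rfl; simp [hu] at hi
  have hiv : Sum.inl i ≠ v := by rintro rfl; simp [hv] at hi
  rwa [comp_swap_apply_of_ne hiu hiv]

end Join

section JoinLabels

variable {m n dt ds : ℕ} {L : Fin dt ⊕ Fin ds → Idx m n true} {c : GDg dt ds}
  {u v : Fin dt ⊕ Fin ds}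

lemma Separates.update_update (hsep : Separates L c) (hu : c u = u) (hv : c v = v) (huv : u ≠ v)
    {N : ℕ} (hN : N ≠ 0) (hL : ∀ x, absI (L x) ≠ N) {p q : Idx m n true} (hp : absI p = N)
    (hq : absI q = N) :
    Separates (Function.update (Function.update L u p) v q) (c ∘ Equiv.swap u v) := by
  set L' := Function.update (Function.update L u p) v q
  have hL'x : ∀ x, x ≠ u → x ≠ v → L' x = L x := fun x hxu hxv => by
    simp [L', Function.update_of_ne hxu, Function.update_of_ne hxv]
  have habsN : ∀ y, absI (L' y) = N ↔ y = u ∨ y = v := fun y => by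
    by_cases hyu : y = u
    · simp [L', hyu, Function.update_of_ne huv, hp]
    by_cases hyv : y = v
    · simp [L', hyv, hq]
    simp [hL'x y hyu hyv, hL y, hyu, hyv]
  constructor
  · intro x
    by_cases hx : x = u ∨ x = v
    · refine iff_of_false (fun h => hN ?_) ?_
      · rw [← (habsN x).2 hx, h, absI_idxZero]
      · rcases hx with rfl | rfl <;> simp [hu, hv, huv, huv.symm]
    · push Not at hx
      rw [hL'x x hx.1 hx.2, comp_swap_apply_of_ne hx.1 hx.2]
      exact hsep.eq_zero_iff x
  · intro x y hx hxy
    by_cases hxN : x = u ∨ x = v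
    · have hyN := (habsN y).1 (hxy ▸ (habsN x).2 hxN)
      rcases hxN with rfl | rfl <;> rcases hyN with rfl | rfl <;> simp [hu, hv]
    · have hyN : ¬ (y = u ∨ y = v) := by rwa [← habsN, ← hxy, habsN]
      push Not at hxN hyN
      rw [hL'x x hxN.1 hxN.2] at hx hxy
      rw [hL'x y hyN.1 hyN.2] at hxy
      rw [comp_swap_apply_of_ne hxN.1 hxN.2]
      exact hsep.eq_or_eq_of_absI_eq x y hx hxy

end JoinLabels

section Osp

variable {m n : ℕ}

@[simp] lemma parI_idxZero : parI (idxZero : Idx m n true) = false := rfl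
@[simp] lemma parI_idxDown (a : Fin (m + n)) : parI (idxDown a) = parI (idxUp a) := rfl
@[simp] lemma idxUp_ne_idxZero (a : Fin (m + n)) : idxUp a ≠ idxZero := by simp [idxZero, idxUp]
@[simp] lemma idxZero_ne_idxDown (a : Fin (m + n)) : idxZero ≠ idxDown a := by
  simp [idxZero, idxDown]
@[simp] lemma idxDown_ne_idxZero (a : Fin (m + n)) : idxDown a ≠ idxZero :=
  (idxZero_ne_idxDown a).symm

def ospX (a : Fin (m + n)) : Matrix (Idx m n true) (Idx m n true) ℂ :=
  Matrix.of fun x y =>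
    (if x = idxUp a ∧ y = idxZero then 1 else 0) -
      (if x = idxZero ∧ y = idxDown a then 1 else 0)

lemma ospX_ne_zero {a : Fin (m + n)} {x y : Idx m n true} (h : ospX a x y ≠ 0) :
    (x = idxUp a ∧ y = idxZero) ∨ (x = idxZero ∧ y = idxDown a) := by
  by_contra hc
  simp only [not_or] at hc
  simp [ospX, hc.1, hc.2] at h

lemma formB_idxUp_left (a : Fin (m + n)) (y : Idx m n true) :
    formB (idxUp a) y = if y = idxDown a then 1 else 0 := by
  obtain ⟨_ | b | b, _⟩ := y <;> simp [formB, idxUp, idxDown, Subtype.ext_iff, eq_comm]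

lemma formB_idxUp_right (a : Fin (m + n)) (x : Idx m n true) :
    formB x (idxUp a) = if x = idxDown a then sgn (parI (idxUp a)) else 0 := by
  obtain ⟨_ | b | b, _⟩ := x <;> simp [formB, idxUp, idxDown, Subtype.ext_iff, sgn, parI]
  split_ifs <;> simp_all; omega

lemma formB_idxZero_left (y : Idx m n true) : formB idxZero y = if y = idxZero then 1 else 0 := by
  obtain ⟨_ | b | b, _⟩ := y <;> simp [formB, idxZero, Subtype.ext_iff]

lemma formB_idxZero_right (x : Idx m n true) : formB x idxZero = if x = idxZero then 1 else 0 := by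
  obtain ⟨_ | b | b, _⟩ := x <;> simp [formB, idxZero, Subtype.ext_iff]

lemma isOspHomogG_ospX (a : Fin (m + n)) :
    IsOspHomogG parI (formBM m n true) (ospX a) (parI (idxUp a)) := by
  refine ⟨fun x y hxy => ?_, fun j l => ?_⟩
  · rcases ospX_ne_zero hxy with ⟨rfl, rfl⟩ | ⟨rfl, rfl⟩ <;> simp
  simp only [ospX, formBM, Matrix.of_apply, sub_mul, ite_mul, one_mul, zero_mul, ite_and,
    Finset.sum_sub_distrib, Finset.sum_ite_eq', Finset.mem_univ, if_true, formB_idxUp_left,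
    formB_idxUp_right, formB_idxZero_left, formB_idxZero_right]
  by_cases hj0 : j = idxZero
  · subst hj0; simp [sgn]
  by_cases hjd : j = idxDown a
  · subst hjd
    by_cases hl : l = idxZero <;> simp [sgn, hl]
    split_ifs <;> norm_num
  · simp [hj0, hjd]

end Osp


section Rho

variable {ι : Type} [DecidableEq ι] {d : ℕ} {p : ι → Bool} {X : Matrix ι ι ℂ}
  {px : Bool}

lemma rhoMatG_ne_zero {o i : Fin d → ι} (h : rhoMatG d p X px o i ≠ 0) :
    ∃ pos, (∀ j, j ≠ pos → o j = i j) ∧ X (o pos) (i pos) ≠ 0 := by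
  rw [rhoMatG, Matrix.of_apply] at h
  obtain ⟨pos, -, hpos⟩ := Finset.exists_ne_zero_of_sum_ne_zero h
  have hoff : ∀ j, j ≠ pos → o j = i j := by
    by_contra hc
    exact hpos (if_neg hc)
  rw [if_pos hoff] at hpos
  exact ⟨pos, hoff, right_ne_zero_of_mul hpos⟩

lemma rhoMatG_update_ne_zero (i : Fin d → ι) (pos : Fin d) {v : ι} (hv : v ≠ i pos)
    (hX : X v (i pos) ≠ 0) : rhoMatG d p X px (Function.update i pos v) i ≠ 0 := by
  rw [rhoMatG, Matrix.of_apply, Finset.sum_eq_single pos]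
  · rw [if_pos fun j hj => Function.update_of_ne hj _ _, Function.update_self]
    refine mul_ne_zero ?_ hX
    split_ifs
    exacts [Finset.prod_ne_zero_iff.2 fun _ _ => sgn_ne_zero _, one_ne_zero]
  · intro j _ hj
    rw [if_neg fun h => hv (by simpa using h pos (Ne.symm hj))]
  · simp

end Rho

section Theta

variable {m n : ℕ} {odd : Bool} {d : ℕ}

lemma ThetaMat_eq_sum (f : EndSp d) :
    ThetaMat m n odd d f = ∑ s, ∑ t, ∑ c, f s t c • FMat m n odd d d t s c := by
  ext o i
  simp [ThetaMat, FMat, Matrix.sum_apply]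

lemma sum_mul_commutator_eq_zero {f : EndSp d}
    {R : Matrix (Fin d → Idx m n odd) (Fin d → Idx m n odd) ℂ}
    (h : ThetaMat m n odd d f * R = R * ThetaMat m n odd d f) (o i : Fin d → Idx m n odd) :
    ∑ s, ∑ t, ∑ c, f s t c *
      (FMat m n odd d d t s c * R - R * FMat m n odd d d t s c) o i = 0 := by
  have := congrArg (fun M => M o i) (sub_eq_zero.2 h)
  simpa [ThetaMat_eq_sum, Finset.sum_mul, Finset.mul_sum, Matrix.sum_apply, Matrix.sub_apply,
    mul_sub, Finset.sum_sub_distrib] using this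

end Theta

section Probe

variable {m n d : ℕ}

structure IsSingletonProbe (t s : Fin d → Or3) (c : DgFun d)
    (L : Fin d ⊕ Fin d → Idx m n true) (z : Fin d ⊕ Fin d) (a : Fin (m + n)) : Prop where
  oriented : OrientedGBD d d t s c
  fits : Fits t s c L
  separates : Separates L c
  fixed : c z = z
  absI_ne : ∀ x, absI (L x) ≠ a + 1

/-- The two rows of these labels index the entry of `[Θ(f), ρ(ospX a)]` that is compared. -/
def probeLabels (L : Fin d ⊕ Fin d → Idx m n true) (z : Fin d ⊕ Fin d) (a : Fin (m + n)) :
    Fin d ⊕ Fin d → Idx m n true :=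
  Function.update L z (Sum.elim (fun _ => idxUp a) (fun _ => idxDown a) z)

lemma probeLabels_of_ne {L : Fin d ⊕ Fin d → Idx m n true} {z y : Fin d ⊕ Fin d}
    (a : Fin (m + n)) (hy : y ≠ z) : probeLabels L z a y = L y :=
  Function.update_of_ne hy _ _

lemma absI_probeLabels_self (L : Fin d ⊕ Fin d → Idx m n true) (z : Fin d ⊕ Fin d)
    (a : Fin (m + n)) : absI (probeLabels L z a z) = a + 1 := by
  rcases z with j | j <;> simp [probeLabels]

variable {t s : Fin d → Or3} {c₀ : DgFun d} {L : Fin d ⊕ Fin d → Idx m n true}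
  {z : Fin d ⊕ Fin d} {a : Fin (m + n)}

lemma IsSingletonProbe.classify (hp : IsSingletonProbe t s c₀ L z a) {y : Fin d ⊕ Fin d}
    {v : Idx m n true}
    (hX : ospX a v (probeLabels L z a y) ≠ 0 ∨ ospX a (probeLabels L z a y) v ≠ 0)
    {t' s' : Fin d → Or3} {c : DgFun d} (hor : OrientedGBD d d t' s' c)
    (hfit : Fits t' s' c (Function.update (probeLabels L z a) y v)) :
    (Function.update (probeLabels L z a) y v = L ∧ t' = t ∧ s' = s ∧ c = c₀) ∨
      ∃ y, c₀ y = y ∧ y ≠ z ∧ c = c₀ ∘ Equiv.swap z y := by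
  have hcases : (probeLabels L z a y = idxZero ∧ absI v = a + 1) ∨
      (v = idxZero ∧ absI (probeLabels L z a y) = a + 1) := by
    rcases hX with hX | hX <;> rcases ospX_ne_zero hX with ⟨h1, h2⟩ | ⟨h1, h2⟩ <;>
      simp [h1, h2]
  rcases hcases with ⟨hy0, hv⟩ | ⟨rfl, hy⟩
  · have hyz : y ≠ z := by
      rintro rfl
      simpa [hy0] using absI_probeLabels_self L y a
    have hcy : c₀ y = y :=
      (hp.separates.eq_zero_iff y).1 (probeLabels_of_ne (L := L) a hyz ▸ hy0)
    refine .inr ⟨y, hcy, hyz, hfit.eq_of_separates hor ?_⟩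
    exact hp.separates.update_update hp.fixed hcy hyz.symm (Nat.succ_ne_zero _) hp.absI_ne
      (by simpa [probeLabels] using absI_probeLabels_self L z a) hv
  · obtain rfl : y = z := by
      by_contra hyz
      exact hp.absI_ne y (probeLabels_of_ne (L := L) a hyz ▸ hy)
    have hL : Function.update (probeLabels L y a) y idxZero = L := by
      rw [probeLabels, Function.update_idem, Function.update_eq_self_iff]
      exact ((hp.separates.eq_zero_iff y).2 hp.fixed).symm
    rw [hL] at hfit ⊢
    obtain ⟨ht, hs⟩ := hfit.orientation_eq hp.fits
    exact .inl ⟨rfl, ht, hs, hfit.eq_of_separates hor hp.separates⟩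

lemma IsSingletonProbe.classify_mul_rho (hp : IsSingletonProbe t s c₀ L z a) {px : Bool}
    {t' s' : Fin d → Or3} {c : DgFun d} (hor : OrientedGBD d d t' s' c)
    {mid : Fin d → Idx m n true}
    (h : wtD m n true d d t' s' c (probeLabels L z a ∘ Sum.inl) mid *
      rhoMatG d parI (ospX a) px mid (probeLabels L z a ∘ Sum.inr) ≠ 0) :
    (Sum.elim (probeLabels L z a ∘ Sum.inl) mid = L ∧ t' = t ∧ s' = s ∧ c = c₀) ∨
      ∃ y, c₀ y = y ∧ y ≠ z ∧ c = c₀ ∘ Equiv.swap z y := by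
  obtain ⟨pos, hoff, hX⟩ := rhoMatG_ne_zero (right_ne_zero_of_mul h)
  have hmid : Sum.elim (probeLabels L z a ∘ Sum.inl) mid =
      Function.update (probeLabels L z a) (.inr pos) (mid pos) := by
    rw [← Function.update_eq_iff.2 ⟨rfl, fun j hj => (hoff j hj).symm⟩, Sum.elim_update_right,
      Sum.elim_comp_inl_inr, Function.update_self]
  have hfit := wtD_ne_zero_iff.1 (left_ne_zero_of_mul h)
  rw [hmid] at hfit ⊢
  exact hp.classify (.inl hX) hor hfit

lemma IsSingletonProbe.classify_rho_mul (hp : IsSingletonProbe t s c₀ L z a) {px : Bool}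
    {t' s' : Fin d → Or3} {c : DgFun d} (hor : OrientedGBD d d t' s' c)
    {mid : Fin d → Idx m n true}
    (h : rhoMatG d parI (ospX a) px (probeLabels L z a ∘ Sum.inl) mid *
      wtD m n true d d t' s' c mid (probeLabels L z a ∘ Sum.inr) ≠ 0) :
    (Sum.elim mid (probeLabels L z a ∘ Sum.inr) = L ∧ t' = t ∧ s' = s ∧ c = c₀) ∨
      ∃ y, c₀ y = y ∧ y ≠ z ∧ c = c₀ ∘ Equiv.swap z y := by
  obtain ⟨pos, hoff, hX⟩ := rhoMatG_ne_zero (left_ne_zero_of_mul h)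
  have hmid : Sum.elim mid (probeLabels L z a ∘ Sum.inr) =
      Function.update (probeLabels L z a) (.inl pos) (mid pos) := by
    rw [← Function.update_eq_iff.2 ⟨rfl, hoff⟩, Sum.elim_update_left,
      Sum.elim_comp_inl_inr, Function.update_self]
  have hfit := wtD_ne_zero_iff.1 (right_ne_zero_of_mul h)
  rw [hmid] at hfit ⊢
  exact hp.classify (.inr hX) hor hfit

lemma IsSingletonProbe.commutator_ne_zero_cases (hp : IsSingletonProbe t s c₀ L z a) {px : Bool}
    {t' s' : Fin d → Or3} {c : DgFun d} (hor : OrientedGBD d d t' s' c)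
    (h : (FMat m n true d d t' s' c * rhoMatG d parI (ospX a) px -
      rhoMatG d parI (ospX a) px * FMat m n true d d t' s' c)
        (probeLabels L z a ∘ Sum.inl) (probeLabels L z a ∘ Sum.inr) ≠ 0) :
    (t' = t ∧ s' = s ∧ c = c₀) ∨
      ∃ y, c₀ y = y ∧ y ≠ z ∧ c = c₀ ∘ Equiv.swap z y := by
  rw [Matrix.sub_apply, Ne, sub_eq_zero, Matrix.mul_apply, Matrix.mul_apply] at h
  rcases not_and_or.1 fun hc : _ = 0 ∧ _ = 0 => h (hc.1.trans hc.2.symm) with h | h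
  · obtain ⟨mid, -, hmid⟩ := Finset.exists_ne_zero_of_sum_ne_zero h
    exact (hp.classify_mul_rho hor hmid).imp_left And.right
  · obtain ⟨mid, -, hmid⟩ := Finset.exists_ne_zero_of_sum_ne_zero h
    exact (hp.classify_rho_mul hor hmid).imp_left And.right

lemma IsSingletonProbe.eq_of_mul_rho_ne_zero (hp : IsSingletonProbe t s c₀ L z a) {px : Bool}
    {mid : Fin d → Idx m n true}
    (h : wtD m n true d d t s c₀ (probeLabels L z a ∘ Sum.inl) mid *
      rhoMatG d parI (ospX a) px mid (probeLabels L z a ∘ Sum.inr) ≠ 0) :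
    probeLabels L z a ∘ Sum.inl = L ∘ Sum.inl ∧ mid = L ∘ Sum.inr := by
  rcases hp.classify_mul_rho hp.oriented h with ⟨hL, -⟩ | ⟨y, hy, hyz, hc⟩
  · exact Sum.elim_eq_iff.1 (hL.trans (Sum.elim_comp_inl_inr L).symm)
  · exact absurd hc.symm (comp_swap_ne hp.fixed hy hyz)

lemma IsSingletonProbe.eq_of_rho_mul_ne_zero (hp : IsSingletonProbe t s c₀ L z a) {px : Bool}
    {mid : Fin d → Idx m n true}
    (h : rhoMatG d parI (ospX a) px (probeLabels L z a ∘ Sum.inl) mid *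
      wtD m n true d d t s c₀ mid (probeLabels L z a ∘ Sum.inr) ≠ 0) :
    mid = L ∘ Sum.inl ∧ probeLabels L z a ∘ Sum.inr = L ∘ Sum.inr := by
  rcases hp.classify_rho_mul hp.oriented h with ⟨hL, -⟩ | ⟨y, hy, hyz, hc⟩
  · exact Sum.elim_eq_iff.1 (hL.trans (Sum.elim_comp_inl_inr L).symm)
  · exact absurd hc.symm (comp_swap_ne hp.fixed hy hyz)

/-- Only the term of `c` itself survives in the entry of the commutator, from the side of the
row of `z`. -/
lemma IsSingletonProbe.commutator_self_ne_zero (hp : IsSingletonProbe t s c₀ L z a) (px : Bool) :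
    (FMat m n true d d t s c₀ * rhoMatG d parI (ospX a) px -
      rhoMatG d parI (ospX a) px * FMat m n true d d t s c₀)
        (probeLabels L z a ∘ Sum.inl) (probeLabels L z a ∘ Sum.inr) ≠ 0 := by
  have hwt : wtD m n true d d t s c₀ (L ∘ Sum.inl) (L ∘ Sum.inr) ≠ 0 :=
    wtD_ne_zero_iff.2 ((Sum.elim_comp_inl_inr L).symm ▸ hp.fits)
  have hLz : L z = idxZero := (hp.separates.eq_zero_iff z).2 hp.fixed
  simp only [Matrix.sub_apply, Matrix.mul_apply, FMat, Matrix.of_apply]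
  rcases z with j | j
  · have hi : probeLabels L (.inl j) a ∘ Sum.inr = L ∘ Sum.inr :=
      funext fun k => probeLabels_of_ne a Sum.inr_ne_inl
    have ho :
        probeLabels L (.inl j) a ∘ Sum.inl = Function.update (L ∘ Sum.inl) j (idxUp a) := by
      ext1 k; by_cases hk : k = j <;> simp [probeLabels, hk]
    rw [Finset.sum_eq_zero fun mid _ => by_contra fun h => ?_,
      Fintype.sum_eq_single (L ∘ Sum.inl) fun mid hmid =>
        by_contra fun h => hmid (hp.eq_of_rho_mul_ne_zero h).1, zero_sub, neg_ne_zero, hi, ho]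
    · exact mul_ne_zero (rhoMatG_update_ne_zero _ _ (by simp [hLz]) (by simp [hLz, ospX])) hwt
    · have := congrFun (hp.eq_of_mul_rho_ne_zero h).1 j
      simp [probeLabels, hLz] at this
  · have ho : probeLabels L (.inr j) a ∘ Sum.inl = L ∘ Sum.inl :=
      funext fun k => probeLabels_of_ne a Sum.inl_ne_inr
    have hi : L ∘ Sum.inr = Function.update (probeLabels L (.inr j) a ∘ Sum.inr) j idxZero := by
      ext1 k; by_cases hk : k = j <;> simp [probeLabels, hk, hLz]
    rw [Fintype.sum_eq_single (L ∘ Sum.inr) fun mid hmid =>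
        by_contra fun h => hmid (hp.eq_of_mul_rho_ne_zero h).2,
      Finset.sum_eq_zero fun mid _ => by_contra fun h => ?_, sub_zero, ho, hi]
    · refine mul_ne_zero (by rwa [← hi]) (rhoMatG_update_ne_zero _ _ ?_ ?_) <;>
        simp [probeLabels, ospX]
    · have := congrFun (hp.eq_of_rho_mul_ne_zero h).2 j
      simp [probeLabels, hLz] at this

lemma IsSingletonProbe.exists_join (hp : IsSingletonProbe t s c₀ L z a) {f : EndSp d}
    (hsupp : ∀ s t c, f s t c ≠ 0 → OrientedGBD d d t s c) {px : Bool}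
    (hcomm : ThetaMat m n true d f * rhoMatG d parI (ospX a) px =
      rhoMatG d parI (ospX a) px * ThetaMat m n true d f)
    (hne : f s t c₀ ≠ 0) :
    ∃ s' t' y, c₀ y = y ∧ y ≠ z ∧ f s' t' (c₀ ∘ Equiv.swap z y) ≠ 0 := by
  by_contra hjoin
  push Not at hjoin
  have hvanish : ∀ s' t' c, ¬ (s' = s ∧ t' = t ∧ c = c₀) → f s' t' c *
      (FMat m n true d d t' s' c * rhoMatG d parI (ospX a) px -
        rhoMatG d parI (ospX a) px * FMat m n true d d t' s' c)
          (probeLabels L z a ∘ Sum.inl) (probeLabels L z a ∘ Sum.inr) = 0 := by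
    intro s' t' c hc
    by_contra h
    obtain ⟨hf, hκ⟩ := mul_ne_zero_iff.1 h
    rcases hp.commutator_ne_zero_cases (hsupp _ _ _ hf) hκ with
      ⟨ht, hs, rfl⟩ | ⟨y, hy, hyz, rfl⟩
    · exact hc ⟨hs, ht, rfl⟩
    · exact hf (hjoin s' t' y hy hyz)
  have hsum := sum_mul_commutator_eq_zero hcomm (probeLabels L z a ∘ Sum.inl)
    (probeLabels L z a ∘ Sum.inr)
  rw [Fintype.sum_eq_single s fun s' hs' => Finset.sum_eq_zero fun t' _ =>
      Finset.sum_eq_zero fun c _ => hvanish s' t' c fun h => hs' h.1,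
    Fintype.sum_eq_single t fun t' ht' => Finset.sum_eq_zero fun c _ =>
      hvanish s t' c fun h => ht' h.2.1,
    Fintype.sum_eq_single c₀ fun c hc => hvanish s t c fun h => hc h.2.2] at hsum
  exact mul_ne_zero hne (hp.commutator_self_ne_zero px) hsum

end Probe

lemma exists_subDiagOf_fixCount_add_two {m n d : ℕ} (hd : d ≤ m + n) {f : EndSp d}
    (hsupp : ∀ s t c, f s t c ≠ 0 → OrientedGBD d d t s c)
    (hcomm : ∀ (X : Matrix (Idx m n true) (Idx m n true) ℂ) (px : Bool),
        IsOspHomogG parI (formBM m n true) X px →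
        Matrix.toLin' (ThetaMat m n true d f) ∘ₗ Matrix.toLin' (rhoMatG d parI X px)
          = Matrix.toLin' (rhoMatG d parI X px) ∘ₗ Matrix.toLin' (ThetaMat m n true d f))
    {s t : Fin d → Or3} {c : DgFun d} (hne : f s t c ≠ 0) (hfix : 0 < fixCount d c) :
    ∃ s' t' c', f s' t' c' ≠ 0 ∧ subDiagOf c c' ∧ fixCount d c' + 2 = fixCount d c ∧
      vCount d c ≤ vCount d c' := by
  have hor := hsupp s t c hne
  obtain ⟨L, hfit, hsep, hlt⟩ := hor.exists_separates (m := m) (n := n) hd hfix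
  obtain ⟨z, hz⟩ : ∃ z, c z = z := by
    obtain ⟨z, hz⟩ := Finset.card_pos.1 hfix
    exact ⟨z, (Finset.mem_filter.1 hz).2⟩
  have hmn : 0 < m + n := (Nat.zero_le _).trans_lt (hlt z)
  let a : Fin (m + n) := ⟨m + n - 1, by omega⟩
  have hp : IsSingletonProbe t s c L z a :=
    ⟨hor, hfit, hsep, hz, fun x => by have := hlt x; simp only [a]; omega⟩
  have hMR := hcomm (ospX a) _ (isOspHomogG_ospX a)
  rw [← Matrix.toLin'_mul, ← Matrix.toLin'_mul, Matrix.toLin'.injective.eq_iff] at hMR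
  obtain ⟨s', t', y, hy, hyz, hf⟩ := hp.exists_join hsupp hMR hne
  exact ⟨s', t', c ∘ Equiv.swap z y, hf, subDiagOf_comp_swap hz hy,
    fixCount_comp_swap_add_two hz hy hyz.symm, vCount_le_comp_swap hz hy⟩

theorem exists_chain_to_brauer_diagram_general
    (m n d : ℕ) (hd : d ≤ m + n) (f : EndSp d)
    (hsupp : ∀ (s t : Fin d → Or3) (c : DgFun d), f s t c ≠ 0 → OrientedGBD d d t s c)
    (hcomm : ∀ (X : Matrix (Idx m n true) (Idx m n true) ℂ) (px : Bool),
        IsOspHomogG (parI (m := m) (n := n) (odd := true)) (formBM m n true) X px →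
        Matrix.toLin' (ThetaMat m n true d f)
            ∘ₗ Matrix.toLin' (rhoMatG d (parI (m := m) (n := n) (odd := true)) X px)
          = Matrix.toLin' (rhoMatG d (parI (m := m) (n := n) (odd := true)) X px)
            ∘ₗ Matrix.toLin' (ThetaMat m n true d f))
    (s t : Fin d → Or3) (c : DgFun d) (hne : f s t c ≠ 0)
    (k r : ℕ) (hk : vCount d c = k) (hr : fixCount d c = 2 * r) :
    ∃ (S T : ℕ → (Fin d → Or3)) (B : ℕ → DgFun d),
      S r = s ∧ T r = t ∧ B r = c ∧
      (∀ i ≤ r, f (S i) (T i) (B i) ≠ 0 ∧ fixCount d (B i) = 2 * i ∧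
        k ≤ vCount d (B i)) ∧
      (∀ i < r, subDiagOf (B (i + 1)) (B i)) := by
  obtain ⟨B, hB, hP, hR⟩ := exists_chain_of_step
    (P := fun i (x : (Fin d → Or3) × (Fin d → Or3) × DgFun d) =>
      f x.1 x.2.1 x.2.2 ≠ 0 ∧ fixCount d x.2.2 = 2 * i ∧ k ≤ vCount d x.2.2)
    (R := fun x y => subDiagOf x.2.2 y.2.2)
    (fun q x ⟨hne, hfix, hkc⟩ => by
      obtain ⟨s', t', c', hf', hsub, hfix', hv⟩ :=
        exists_subDiagOf_fixCount_add_two hd hsupp hcomm hne (by omega)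
      exact ⟨(s', t', c'), ⟨hf', by dsimp only; omega, hkc.trans hv⟩, hsub⟩)
    r (s, t, c) ⟨hne, hr, hk.ge⟩
  exact ⟨fun i => (B i).1, fun i => (B i).2.1, fun i => (B i).2.2, congrArg (·.1) hB,
    congrArg (·.2.1) hB, congrArg (·.2.2) hB, hP, hR⟩

/-- **Corollary 5.8.**  Odd case, `d ≤ m+n`.  Let `f = ∑ γ_{s,b,t} 1_s b 1_t`
be an element of `End_{Mat(OB_d(m-n))}(⊕_s s)` with `Θ(f)` commuting with the
action of `osp(V)`.  If `γ_{s_r,b_r,t_r} ≠ 0` with `b_r` having `k` vertical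
strands and `2r > 0` singletons, then there is a chain of oriented generalized
Brauer diagrams `(s_i, b_i, t_i)`, `0 ≤ i ≤ r`, with nonzero coefficients,
`b_i` having `2i` singletons and at least `k` vertical strands, and
`b_r ◁ b_{r-1} ◁ ⋯ ◁ b_0`; in particular `b_0` has no singleton blocks. -/
theorem exists_chain_to_brauer_diagram
    (m n d : ℕ) (hd : d ≤ m + n) (f : EndSp d)
    (hsupp : ∀ (s t : Fin d → Or3) (c : DgFun d), f s t c ≠ 0 → OrientedGBD d d t s c)
    (hcomm : ∀ (X : Matrix (Idx m n true) (Idx m n true) ℂ) (px : Bool),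
        IsOspHomogG (parI (m := m) (n := n) (odd := true)) (formBM m n true) X px →
        Matrix.toLin' (ThetaMat m n true d f)
            ∘ₗ Matrix.toLin' (rhoMatG d (parI (m := m) (n := n) (odd := true)) X px)
          = Matrix.toLin' (rhoMatG d (parI (m := m) (n := n) (odd := true)) X px)
            ∘ₗ Matrix.toLin' (ThetaMat m n true d f))
    (s t : Fin d → Or3) (c : DgFun d) (hne : f s t c ≠ 0)
    (k r : ℕ) (hk : vCount d c = k) (hr : fixCount d c = 2 * r) (hrpos : 0 < r) :
    ∃ (S T : ℕ → (Fin d → Or3)) (B : ℕ → DgFun d),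
      S r = s ∧ T r = t ∧ B r = c ∧
      (∀ i ≤ r, f (S i) (T i) (B i) ≠ 0 ∧ fixCount d (B i) = 2 * i ∧
        k ≤ vCount d (B i)) ∧
      (∀ i < r, subDiagOf (B (i + 1)) (B i)) :=
  exists_chain_to_brauer_diagram_general m n d hd f hsupp hcomm s t c hne k r hk hr

end
end SWOSP
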